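/- Let γ > 0 and c > 0. There is a constant C = C(c,γ) such that for all A > 0 and all B ≥ A, ∫₀^∞ |1/√s − 𝟙_{{s>A}}/√(s−A)| · (1/√s) · e^{−c(B/s)^γ} ds ≤ C. In particular the bound is uniform in A and B. -/

import Mathlib

/-!
On `(0, A]` the weight is `1 / s`, and `e^{-x} ≤ 1 / x` bounds `s⁻¹ e^{-c (B/s)^γ}` by
`c⁻¹ A^{-γ} s^{γ-1}`, whose integral is `1 / (c γ)`. On `(A, ∞)` the exponential is at most `1`,
and the weight `1 / √(s (s - A)) - 1 / s` has the primitive `2 log (√s + √(s - A)) - log s`,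
which vanishes at `A` and tends to `log 4`. Hence `C = 1 / (c γ) + log 4` works.
-/

open Set MeasureTheory Filter Topology Real

noncomputable def rieszWeight (A s : ℝ) : ℝ :=
  |1 / √s - (if A < s then 1 / √(s - A) else 0)| * (1 / √s)

noncomputable def rieszPrimitive (A s : ℝ) : ℝ :=
  2 * log (√s + √(s - A)) - log s

namespace rieszWeight

variable {A s : ℝ}

theorem of_le (hs : 0 < s) (h : s ≤ A) : rieszWeight A s = s⁻¹ := by
  rw [rieszWeight, if_neg h.not_gt, sub_zero, abs_of_nonneg (by positivity),
    div_mul_div_comm, one_mul, mul_self_sqrt hs.le, one_div]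

theorem of_lt (hA : 0 ≤ A) (h : A < s) : rieszWeight A s = (√s * √(s - A))⁻¹ - s⁻¹ := by
  have hsA : 0 < s - A := sub_pos.2 h
  have hs : 0 < s := hA.trans_lt h
  have hle : 1 / √s ≤ 1 / √(s - A) :=
    one_div_le_one_div_of_le (sqrt_pos.2 hsA) (sqrt_le_sqrt (by linarith))
  rw [rieszWeight, if_pos h, abs_of_nonpos (sub_nonpos.2 hle)]
  have := sqrt_pos.2 hs
  have := sqrt_pos.2 hsA
  field_simp
  linear_combination √(s - A) * mul_self_sqrt hs.le

theorem nonneg (A s : ℝ) : 0 ≤ rieszWeight A s := by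
  unfold rieszWeight; positivity

theorem measurable (A : ℝ) : Measurable (rieszWeight A) := by
  have : Measurable fun s => if A < s then 1 / √(s - A) else 0 :=
    Measurable.ite measurableSet_Ioi (by fun_prop) measurable_const
  unfold rieszWeight
  fun_prop

end rieszWeight

theorem hasDerivAt_rieszPrimitive {A s : ℝ} (hA : 0 ≤ A) (h : A < s) :
    HasDerivAt (rieszPrimitive A) (rieszWeight A s) s := by
  have hsA : 0 < s - A := sub_pos.2 h
  have hs : 0 < s := hA.trans_lt h
  have h1 : HasDerivAt (fun s => √s) (1 / (2 * √s)) s := hasDerivAt_sqrt hs.ne'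
  have h2 : HasDerivAt (fun s => √(s - A)) (1 / (2 * √(s - A))) s := by
    simpa using ((hasDerivAt_id s).sub_const A).sqrt hsA.ne'
  have hpos : 0 < √s + √(s - A) := by positivity
  refine (((h1.add h2).log hpos.ne').const_mul 2 |>.sub (hasDerivAt_log hs.ne')).congr_deriv ?_
  rw [rieszWeight.of_lt hA h, Pi.add_apply]
  have := sqrt_pos.2 hs
  have := sqrt_pos.2 hsA
  field_simp
  ring

theorem rieszPrimitive_eq_two_mul_log {A s : ℝ} (hs : 0 < s) :
    rieszPrimitive A s = 2 * log (1 + √(1 - A / s)) := by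
  have hfactor : √s + √(s - A) = √s * (1 + √(1 - A / s)) := by
    rw [mul_add, mul_one, ← sqrt_mul hs.le, mul_sub, mul_one, mul_div_cancel₀ _ hs.ne']
  rw [rieszPrimitive, hfactor, log_mul (sqrt_pos.2 hs).ne' (by positivity), log_sqrt hs.le]
  ring

theorem rieszPrimitive_self {A : ℝ} (hA : 0 ≤ A) : rieszPrimitive A A = 0 := by
  rw [rieszPrimitive, sub_self, sqrt_zero, add_zero, log_sqrt hA]
  ring

theorem tendsto_rieszPrimitive_atTop (A : ℝ) :
    Tendsto (rieszPrimitive A) atTop (𝓝 (2 * log 2)) := by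
  have hA_div : Tendsto (fun s => 1 - A / s) atTop (𝓝 (1 - 0)) :=
    tendsto_const_nhds.sub (tendsto_const_nhds.div_atTop tendsto_id)
  rw [sub_zero] at hA_div
  have hlim : Tendsto (fun s => 2 * log (1 + √(1 - A / s))) atTop (𝓝 (2 * log (1 + √1))) :=
    ((hA_div.sqrt.const_add 1).log (by norm_num)).const_mul 2
  rw [sqrt_one, one_add_one_eq_two] at hlim
  exact hlim.congr' ((eventually_gt_atTop 0).mono fun _ hs =>
    (rieszPrimitive_eq_two_mul_log hs).symm)

theorem continuousAt_rieszPrimitive_self {A : ℝ} (hA : 0 < A) :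
    ContinuousAt (rieszPrimitive A) A := by
  unfold rieszPrimitive
  fun_prop (disch := positivity)

theorem integrableOn_Ioi_rieszWeight {A : ℝ} (hA : 0 < A) :
    IntegrableOn (rieszWeight A) (Ioi A) :=
  integrableOn_Ioi_deriv_of_nonneg (continuousAt_rieszPrimitive_self hA).continuousWithinAt
    (fun _ hs => hasDerivAt_rieszPrimitive hA.le hs) (fun s _ => rieszWeight.nonneg A s)
    (tendsto_rieszPrimitive_atTop A)

theorem integral_Ioi_rieszWeight {A : ℝ} (hA : 0 < A) :
    ∫ s in Ioi A, rieszWeight A s = 2 * log 2 := by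
  rw [integral_Ioi_of_hasDerivAt_of_nonneg (continuousAt_rieszPrimitive_self hA).continuousWithinAt
    (fun _ hs => hasDerivAt_rieszPrimitive hA.le hs) (fun s _ => rieszWeight.nonneg A s)
    (tendsto_rieszPrimitive_atTop A), rieszPrimitive_self hA.le, sub_zero]

theorem Real.exp_neg_le_inv {x : ℝ} (hx : 0 < x) : exp (-x) ≤ x⁻¹ := by
  rw [exp_neg]
  exact inv_anti₀ hx ((lt_add_one x).le.trans (add_one_le_exp x))

section

variable {γ c A B : ℝ}

theorem measurable_rieszWeight_mul_exp :
    Measurable fun s => rieszWeight A s * exp (-c * (B / s) ^ γ) :=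
  (rieszWeight.measurable A).mul (by fun_prop)

theorem rieszWeight_mul_exp_nonneg (s : ℝ) : 0 ≤ rieszWeight A s * exp (-c * (B / s) ^ γ) :=
  mul_nonneg (rieszWeight.nonneg A s) (exp_pos _).le

theorem rieszWeight_mul_exp_le_rpow (hγ : 0 ≤ γ) (hc : 0 < c) (hA : 0 < A) (hAB : A ≤ B)
    {s : ℝ} (hs : s ∈ Ioc 0 A) :
    rieszWeight A s * exp (-c * (B / s) ^ γ) ≤ c⁻¹ * A ^ (-γ) * s ^ (γ - 1) := by
  obtain ⟨hs0, hsA⟩ := hs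
  have hB : 0 < B := hA.trans_le hAB
  calc rieszWeight A s * exp (-c * (B / s) ^ γ)
      ≤ s⁻¹ * (c * (B / s) ^ γ)⁻¹ := by
        rw [rieszWeight.of_le hs0 hsA, neg_mul]
        gcongr
        exact exp_neg_le_inv (by positivity)
    _ = c⁻¹ * B ^ (-γ) * s ^ (γ - 1) := by
        rw [div_rpow hB.le hs0.le, rpow_neg hB.le, rpow_sub_one hs0.ne']
        field_simp
    _ ≤ c⁻¹ * A ^ (-γ) * s ^ (γ - 1) := by
        have := rpow_le_rpow_of_nonpos hA hAB (neg_nonpos.2 hγ)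
        gcongr

theorem rieszWeight_mul_exp_le (hc : 0 ≤ c) (hB : 0 ≤ B) {s : ℝ} (hs : 0 ≤ s) :
    rieszWeight A s * exp (-c * (B / s) ^ γ) ≤ rieszWeight A s := by
  refine mul_le_of_le_one_right (rieszWeight.nonneg A s) (exp_le_one_iff.2 ?_)
  rw [neg_mul, neg_nonpos]
  positivity

theorem integral_Ioc_rpow_sub_one (hγ : 0 < γ) (hA : 0 ≤ A) :
    ∫ s in Ioc 0 A, s ^ (γ - 1) = A ^ γ / γ := by
  rw [← intervalIntegral.integral_of_le hA, integral_rpow (Or.inl (by linarith)), sub_add_cancel,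
    zero_rpow hγ.ne', sub_zero]

theorem integrableOn_Ioc_rieszWeight_mul_exp (hγ : 0 < γ) (hc : 0 < c) (hA : 0 < A)
    (hAB : A ≤ B) :
    IntegrableOn (fun s => rieszWeight A s * exp (-c * (B / s) ^ γ)) (Ioc 0 A) := by
  refine Integrable.mono' (g := fun s => c⁻¹ * A ^ (-γ) * s ^ (γ - 1))
    ((intervalIntegral.intervalIntegrable_rpow' (by linarith)).1.const_mul _)
    measurable_rieszWeight_mul_exp.aestronglyMeasurable
    (ae_restrict_of_forall_mem measurableSet_Ioc fun s hs => ?_)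
  rw [Real.norm_of_nonneg (rieszWeight_mul_exp_nonneg s)]
  exact rieszWeight_mul_exp_le_rpow hγ.le hc hA hAB hs

theorem setIntegral_Ioc_rieszWeight_mul_exp_le (hγ : 0 < γ) (hc : 0 < c) (hA : 0 < A)
    (hAB : A ≤ B) : ∫ s in Ioc 0 A, rieszWeight A s * exp (-c * (B / s) ^ γ) ≤ (c * γ)⁻¹ :=
  calc ∫ s in Ioc 0 A, rieszWeight A s * exp (-c * (B / s) ^ γ)
      ≤ ∫ s in Ioc 0 A, c⁻¹ * A ^ (-γ) * s ^ (γ - 1) :=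
        setIntegral_mono_on (integrableOn_Ioc_rieszWeight_mul_exp hγ hc hA hAB)
          ((intervalIntegral.intervalIntegrable_rpow' (by linarith)).1.const_mul _)
          measurableSet_Ioc fun s hs => rieszWeight_mul_exp_le_rpow hγ.le hc hA hAB hs
    _ = (c * γ)⁻¹ := by
        rw [integral_const_mul, integral_Ioc_rpow_sub_one hγ hA.le, rpow_neg hA.le]
        have := rpow_pos_of_pos hA γ
        field_simp

theorem integrableOn_Ioi_rieszWeight_mul_exp (hc : 0 ≤ c) (hA : 0 < A) (hAB : A ≤ B) :
    IntegrableOn (fun s => rieszWeight A s * exp (-c * (B / s) ^ γ)) (Ioi A) := by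
  refine Integrable.mono' (integrableOn_Ioi_rieszWeight hA)
    measurable_rieszWeight_mul_exp.aestronglyMeasurable
    (ae_restrict_of_forall_mem measurableSet_Ioi fun s hs => ?_)
  rw [Real.norm_of_nonneg (rieszWeight_mul_exp_nonneg s)]
  exact rieszWeight_mul_exp_le hc (hA.le.trans hAB) (hA.le.trans (mem_Ioi.1 hs).le)

theorem setIntegral_Ioi_rieszWeight_mul_exp_le (hc : 0 ≤ c) (hA : 0 < A) (hAB : A ≤ B) :
    ∫ s in Ioi A, rieszWeight A s * exp (-c * (B / s) ^ γ) ≤ 2 * log 2 := by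
  rw [← integral_Ioi_rieszWeight hA]
  exact setIntegral_mono_on (integrableOn_Ioi_rieszWeight_mul_exp hc hA hAB)
    (integrableOn_Ioi_rieszWeight hA) measurableSet_Ioi fun s hs =>
      rieszWeight_mul_exp_le hc (hA.le.trans hAB) (hA.le.trans (mem_Ioi.1 hs).le)

end

/-- Uniform bound for the Riesz transform kernel integral:
`∫₀^∞ |1/√s − 𝟙_{s>A}/√(s−A)| (1/√s) e^{−c(B/s)^γ} ds ≤ C` uniformly in `0 < A ≤ B`. -/
theorem riesz_kernel_integral_bound
    (γ c : ℝ) (hγ : 0 < γ) (hc : 0 < c) :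
    ∃ C : ℝ, 0 < C ∧ ∀ A B : ℝ, 0 < A → A ≤ B →
      (∫ s in Ioi (0 : ℝ),
          |1 / Real.sqrt s - (if A < s then 1 / Real.sqrt (s - A) else 0)| *
            (1 / Real.sqrt s) * Real.exp (-c * (B / s) ^ γ))
        ≤ C := by
  refine ⟨(c * γ)⁻¹ + 2 * log 2, by positivity, fun A B hA hAB => ?_⟩
  change ∫ s in Ioi 0, rieszWeight A s * exp (-c * (B / s) ^ γ) ≤ _
  rw [← Ioc_union_Ioi_eq_Ioi hA.le, setIntegral_union Ioc_disjoint_Ioi_same measurableSet_Ioi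
    (integrableOn_Ioc_rieszWeight_mul_exp hγ hc hA hAB)
    (integrableOn_Ioi_rieszWeight_mul_exp hc.le hA hAB)]
  exact add_le_add (setIntegral_Ioc_rieszWeight_mul_exp_le hγ hc hA hAB)
    (setIntegral_Ioi_rieszWeight_mul_exp_le hc.le hA hAB)
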